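/- Let P, K be positive integers, let v_1, …, v_K ∈ ℂ^P, let a ∈ ℝ^K be such that C = Σ_{k=1}^K a_k v_k v_k^H is Hermitian positive definite, and let S = C + Δ where Δ is Hermitian with ‖Δ‖_F ≤ ε. Let â ∈ ℝ^K be such that Ĉ = Σ_{k=1}^K â_k v_k v_k^H satisfies μ I ⪯ Ĉ ⪯ λ I for some 0 < μ ≤ λ, and suppose â is a stationary point of the negative log-likelihood, i.e. v_k^H Ĉ^{-1} (Ĉ − S) Ĉ^{-1} v_k = 0 for every k = 1, …, K. Then ‖Ĉ − C‖_F² ≤ (λ²/μ²)·ε². -/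

import Mathlib

open Matrix
open scoped ComplexOrder

/-- The rank-one Hermitian matrix `v vᴴ` formed from a vector `v ∈ ℂ^P`. -/
noncomputable def outer {P : ℕ} (v : Fin P → ℂ) : Matrix (Fin P) (Fin P) ℂ :=
  Matrix.of fun p q => v p * star (v q)

/-- The Frobenius norm `‖X‖_F = (Σ_{p,q} |X_{pq}|²)^{1/2}`. -/
noncomputable def frobNorm {P : ℕ} (X : Matrix (Fin P) (Fin P) ℂ) : ℝ :=
  Real.sqrt (∑ p, ∑ q, ‖X p q‖ ^ 2)

/-!
Write `E = Ĉ - C` and `Ĉ⁻¹ = V²` with `V = Ĉ^{-1/2}` Hermitian. As `E` is a real combination of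
the `v_k v_kᴴ`, stationarity gives `tr(Ĉ⁻¹ (E - Δ) Ĉ⁻¹ E) = 0`: in the Frobenius inner product
`F = V E V` is orthogonal to `F - G`, where `G = V Δ V`, so `‖F‖ ≤ ‖G‖`. The sandwich bound
`‖R X R‖ ≤ c ‖X‖` for Hermitian `R` with `R² ⪯ c I` then gives `‖G‖ ≤ μ⁻¹ ‖Δ‖`
(as `Ĉ⁻¹ ⪯ μ⁻¹ I`) and `‖E‖ = ‖V⁻¹ F V⁻¹‖ ≤ λ ‖F‖` (as `Ĉ ⪯ λ I`).
-/

section Trace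

variable {𝕜 : Type*} [RCLike 𝕜] {n : Type*} [Fintype n] [DecidableEq n]

open scoped MatrixOrder in
lemma Matrix.PosSemidef.re_trace_mul_nonneg {A B : Matrix n n 𝕜} (hA : A.PosSemidef)
    (hB : B.PosSemidef) : 0 ≤ RCLike.re (A * B).trace := by
  have hconj : (CFC.sqrt A * B * CFC.sqrt A).PosSemidef := by
    simpa [(CFC.sqrt_nonneg A).posSemidef.1.eq] using hB.mul_mul_conjTranspose_same (CFC.sqrt A)
  have htrace : (A * B).trace = (CFC.sqrt A * B * CFC.sqrt A).trace := by
    nth_rw 1 [← CFC.sqrt_mul_sqrt_self A hA.nonneg]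
    rw [Matrix.mul_assoc, trace_mul_comm, Matrix.mul_assoc]
  rw [htrace]
  exact (RCLike.nonneg_iff.mp hconj.trace_nonneg).1

lemma Matrix.PosSemidef.re_trace_mul_le {A B : Matrix n n 𝕜} {c : ℝ} (hA : A.PosSemidef)
    (hB : ((c : 𝕜) • 1 - B).PosSemidef) :
    RCLike.re (A * B).trace ≤ c * RCLike.re A.trace := by
  have h := hA.re_trace_mul_nonneg hB
  rw [Matrix.mul_sub, trace_sub, mul_smul_comm, Matrix.mul_one, trace_smul, map_sub,
    smul_eq_mul, RCLike.re_ofReal_mul] at h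
  linarith

end Trace

section Loewner

variable {n : Type*} [DecidableEq n]

open scoped MatrixOrder Matrix.Norms.L2Operator in
lemma Matrix.PosDef.posSemidef_inv_sub_inv [Fintype n] {A B : Matrix n n ℂ} (hA : A.PosDef)
    (hAB : (B - A).PosSemidef) : (A⁻¹ - B⁻¹).PosSemidef := by
  have hB : B.PosDef := by simpa using hA.add_posSemidef hAB
  have h := CStarAlgebra.inv_le_inv (a := hA.isUnit.unit) (b := hB.isUnit.unit)
    hA.posSemidef.nonneg hAB
  rwa [Matrix.coe_units_inv, Matrix.coe_units_inv, IsUnit.unit_spec, IsUnit.unit_spec] at h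

lemma Matrix.PosSemidef.posDef_of_sub_smul_one {A : Matrix n n ℂ} {μ : ℝ} (hμ : 0 < μ)
    (hA : (A - (μ : ℂ) • 1).PosSemidef) : A.PosDef := by
  simpa using (PosDef.one.smul (Complex.zero_lt_real.mpr hμ)).add_posSemidef hA

lemma Matrix.PosSemidef.inv_smul_one_sub_inv [Fintype n] {A : Matrix n n ℂ} {μ : ℝ} (hμ : 0 < μ)
    (hA : (A - (μ : ℂ) • 1).PosSemidef) : (((μ⁻¹ : ℝ) : ℂ) • 1 - A⁻¹).PosSemidef := by
  have h := (PosDef.one.smul (Complex.zero_lt_real.mpr hμ)).posSemidef_inv_sub_inv hA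
  have hμ' : (μ : ℂ) ≠ 0 := by exact_mod_cast hμ.ne'
  have hinv : ((μ : ℂ) • (1 : Matrix n n ℂ))⁻¹ = ((μ⁻¹ : ℝ) : ℂ) • 1 := by
    refine inv_eq_left_inv ?_
    rw [smul_mul_smul_comm, Matrix.one_mul, Complex.ofReal_inv, inv_mul_cancel₀ hμ', one_smul]
  rwa [hinv] at h

end Loewner

section FrobeniusInner

variable {n : Type*} [Fintype n]

noncomputable def frobInner (X Y : Matrix n n ℂ) : ℝ := (Xᴴ * Y).trace.re

lemma frobInner_comm (X Y : Matrix n n ℂ) : frobInner X Y = frobInner Y X := by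
  have h : Yᴴ * X = (Xᴴ * Y)ᴴ := by rw [conjTranspose_mul, conjTranspose_conjTranspose]
  rw [frobInner, frobInner, h, trace_conjTranspose, Complex.star_def, Complex.conj_re]

lemma frobInner_self_eq_sum (X : Matrix n n ℂ) : frobInner X X = ∑ p, ∑ q, ‖X p q‖ ^ 2 := by
  simp only [frobInner, trace, diag, mul_apply, conjTranspose_apply, Complex.re_sum]
  rw [Finset.sum_comm]
  refine Finset.sum_congr rfl fun p _ => Finset.sum_congr rfl fun q _ => ?_
  simp [Complex.mul_re, Complex.sq_norm, Complex.normSq_apply]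

lemma frobInner_self_nonneg (X : Matrix n n ℂ) : 0 ≤ frobInner X X := by
  rw [frobInner_self_eq_sum]
  positivity

lemma frobInner_sub_sub (X Y : Matrix n n ℂ) :
    frobInner (X - Y) (X - Y) = frobInner X X - 2 * frobInner Y X + frobInner Y Y := by
  have hcomm := frobInner_comm X Y
  simp only [frobInner, conjTranspose_sub, sub_mul, mul_sub, trace_sub, Complex.sub_re] at hcomm ⊢
  linarith

lemma frobInner_self_le_of_frobInner_sub_eq_zero {F G : Matrix n n ℂ}
    (h : frobInner (F - G) F = 0) : frobInner F F ≤ frobInner G G := by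
  have hG : G = F - (F - G) := (sub_sub_cancel F G).symm
  have := frobInner_self_nonneg (F - G)
  rw [hG, frobInner_sub_sub, h]
  linarith

lemma frobInner_conj_eq {W X : Matrix n n ℂ} (hW : W.IsHermitian) (hX : X.IsHermitian)
    (Y : Matrix n n ℂ) :
    frobInner (W * X * W) (W * Y * W) = (W * W * X * (W * W) * Y).trace.re := by
  rw [frobInner, conjTranspose_mul, conjTranspose_mul, hW.eq, hX.eq,
    show W * (X * W) * (W * Y * W) = W * X * W * W * Y * W by simp only [Matrix.mul_assoc],
    trace_mul_comm]
  simp only [Matrix.mul_assoc]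

variable [DecidableEq n]

lemma frobInner_mul_mul_self_le {R : Matrix n n ℂ} (X : Matrix n n ℂ) {c : ℝ}
    (hR : R.IsHermitian) (hc : 0 ≤ c) (hRc : ((c : ℂ) • 1 - R * R).PosSemidef) :
    frobInner (R * X * R) (R * X * R) ≤ c ^ 2 * frobInner X X := by
  have hRR : (R * R).PosSemidef := by
    simpa [hR.eq] using posSemidef_conjTranspose_mul_self R
  calc frobInner (R * X * R) (R * X * R)
      = ((Xᴴ * (R * R) * X) * (R * R)).trace.re := by
        rw [frobInner, conjTranspose_mul, conjTranspose_mul, hR.eq,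
          show R * (Xᴴ * R) * (R * X * R) = R * (Xᴴ * R * R * X * R) by
            simp only [Matrix.mul_assoc],
          trace_mul_comm]
        simp only [Matrix.mul_assoc]
    _ ≤ c * (Xᴴ * (R * R) * X).trace.re :=
        (hRR.conjTranspose_mul_mul_same X).re_trace_mul_le hRc
    _ = c * ((X * Xᴴ) * (R * R)).trace.re := by rw [trace_mul_cycle]
    _ ≤ c * (c * (X * Xᴴ).trace.re) :=
        mul_le_mul_of_nonneg_left ((posSemidef_self_mul_conjTranspose X).re_trace_mul_le hRc) hc
    _ = c ^ 2 * frobInner X X := by rw [frobInner, trace_mul_comm]; ring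

end FrobeniusInner

open scoped MatrixOrder in
theorem frobInner_self_le_of_trace_eq_zero {n : Type*} [Fintype n] [DecidableEq n]
    {Chat E Δ : Matrix n n ℂ} {μ lam : ℝ} (hμ : 0 < μ) (hlam : 0 ≤ lam)
    (hlow : (Chat - (μ : ℂ) • 1).PosSemidef) (hhigh : ((lam : ℂ) • 1 - Chat).PosSemidef)
    (hE : E.IsHermitian) (hΔ : Δ.IsHermitian)
    (h : (Chat⁻¹ * (E - Δ) * Chat⁻¹ * E).trace = 0) :
    frobInner E E ≤ (lam / μ) ^ 2 * frobInner Δ Δ := by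
  have hChat := hlow.posDef_of_sub_smul_one hμ
  set W := CFC.sqrt Chat
  have hWH : W.IsHermitian := (CFC.sqrt_nonneg Chat).posSemidef.isHermitian
  have hWW : W * W = Chat := CFC.sqrt_mul_sqrt_self Chat hChat.posSemidef.nonneg
  have hWdet : IsUnit W.det := by
    refine isUnit_of_mul_isUnit_left (y := W.det) ?_
    rw [← det_mul, hWW]
    exact hChat.isUnit.map detMonoidHom
  set V := W⁻¹
  have hVH : V.IsHermitian := hWH.inv
  have hVV : V * V = Chat⁻¹ := by rw [← Matrix.mul_inv_rev, hWW]
  set F := V * E * V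
  set G := V * Δ * V
  have hFG : frobInner F F ≤ frobInner G G := by
    refine frobInner_self_le_of_frobInner_sub_eq_zero ?_
    rw [show F - G = V * (E - Δ) * V by simp only [F, G, Matrix.mul_sub, Matrix.sub_mul],
      frobInner_conj_eq hVH (hE.sub hΔ), hVV, h, Complex.zero_re]
  have hGΔ : frobInner G G ≤ μ⁻¹ ^ 2 * frobInner Δ Δ :=
    frobInner_mul_mul_self_le Δ hVH (inv_pos.mpr hμ).le (hVV ▸ hlow.inv_smul_one_sub_inv hμ)
  have hEF : frobInner E E ≤ lam ^ 2 * frobInner F F := by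
    have hWFW : W * F * W = E := by
      rw [show W * F * W = W * V * E * (V * W) by simp only [F, Matrix.mul_assoc],
        mul_nonsing_inv W hWdet, nonsing_inv_mul W hWdet, Matrix.one_mul, Matrix.mul_one]
    simpa [hWFW] using frobInner_mul_mul_self_le F hWH hlam (hWW ▸ hhigh)
  calc frobInner E E ≤ lam ^ 2 * frobInner F F := hEF
    _ ≤ lam ^ 2 * (μ⁻¹ ^ 2 * frobInner Δ Δ) := by gcongr; exact hFG.trans hGΔ
    _ = (lam / μ) ^ 2 * frobInner Δ Δ := by ring

lemma frobNorm_sq {P : ℕ} (X : Matrix (Fin P) (Fin P) ℂ) : frobNorm X ^ 2 = frobInner X X := by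
  rw [frobNorm, Real.sq_sqrt (by positivity), frobInner_self_eq_sum]

lemma trace_mul_outer {P : ℕ} (M : Matrix (Fin P) (Fin P) ℂ) (v : Fin P → ℂ) :
    (M * outer v).trace = star v ⬝ᵥ (M *ᵥ v) := by
  simp only [trace, diag, mul_apply, outer, of_apply, dotProduct, mulVec, Pi.star_apply,
    Finset.mul_sum]
  exact Finset.sum_congr rfl fun p _ => Finset.sum_congr rfl fun q _ => by ring

theorem stmt_1_general (P K : ℕ)
    (v : Fin K → Fin P → ℂ) (a : Fin K → ℝ)
    (C : Matrix (Fin P) (Fin P) ℂ)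
    (hCdef : C = ∑ k, (a k : ℂ) • outer (v k))
    (hCpd : C.PosDef)
    (Δ : Matrix (Fin P) (Fin P) ℂ) (hΔherm : Δ.IsHermitian)
    (ε : ℝ) (hΔ : frobNorm Δ ≤ ε)
    (S : Matrix (Fin P) (Fin P) ℂ) (hSdef : S = C + Δ)
    (ahat : Fin K → ℝ)
    (Chat : Matrix (Fin P) (Fin P) ℂ)
    (hChatdef : Chat = ∑ k, (ahat k : ℂ) • outer (v k))
    (μ lam : ℝ) (hμ : 0 < μ) (hμlam : μ ≤ lam)
    (hlow : (Chat - (μ : ℂ) • (1 : Matrix (Fin P) (Fin P) ℂ)).PosSemidef)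
    (hhigh : ((lam : ℂ) • (1 : Matrix (Fin P) (Fin P) ℂ) - Chat).PosSemidef)
    (hstat : ∀ k, star (v k) ⬝ᵥ ((Chat⁻¹ * (Chat - S) * Chat⁻¹) *ᵥ v k) = 0) :
    frobNorm (Chat - C) ^ 2 ≤ (lam ^ 2 / μ ^ 2) * ε ^ 2 := by
  have hE : (Chat - C).IsHermitian :=
    (hlow.posDef_of_sub_smul_one hμ).isHermitian.sub hCpd.isHermitian
  have hEsum : Chat - C = ∑ k, ((ahat k : ℂ) - a k) • outer (v k) := by
    simp only [hChatdef, hCdef, sub_smul, Finset.sum_sub_distrib]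
  have htrace : (Chat⁻¹ * (Chat - C - Δ) * Chat⁻¹ * (Chat - C)).trace = 0 := by
    rw [show Chat - C - Δ = Chat - S by rw [hSdef, sub_sub], hEsum, Matrix.mul_sum, trace_sum]
    refine Finset.sum_eq_zero fun k _ => ?_
    rw [mul_smul_comm, trace_smul, trace_mul_outer, hstat k, smul_zero]
  rw [frobNorm_sq, ← div_pow]
  calc frobInner (Chat - C) (Chat - C) ≤ (lam / μ) ^ 2 * frobInner Δ Δ :=
        frobInner_self_le_of_trace_eq_zero hμ (hμ.le.trans hμlam) hlow hhigh hE hΔherm htrace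
    _ = (lam / μ) ^ 2 * frobNorm Δ ^ 2 := by rw [frobNorm_sq]
    _ ≤ (lam / μ) ^ 2 * ε ^ 2 := by gcongr; exact Real.sqrt_nonneg _

/-- Stability of stationary points of the NLL under a perturbed
sample covariance `S = C + Δ` with `‖Δ‖_F ≤ ε` and `μ I ⪯ Ĉ ⪯ λ I`. -/
theorem stmt_1 (P K : ℕ) (hP : 0 < P) (hK : 0 < K)
    (v : Fin K → Fin P → ℂ) (a : Fin K → ℝ)
    (C : Matrix (Fin P) (Fin P) ℂ)
    (hCdef : C = ∑ k, (a k : ℂ) • outer (v k))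
    (hCpd : C.PosDef)
    (Δ : Matrix (Fin P) (Fin P) ℂ) (hΔherm : Δ.IsHermitian)
    (ε : ℝ) (hΔ : frobNorm Δ ≤ ε)
    (S : Matrix (Fin P) (Fin P) ℂ) (hSdef : S = C + Δ)
    (ahat : Fin K → ℝ)
    (Chat : Matrix (Fin P) (Fin P) ℂ)
    (hChatdef : Chat = ∑ k, (ahat k : ℂ) • outer (v k))
    (μ lam : ℝ) (hμ : 0 < μ) (hμlam : μ ≤ lam)
    (hlow : (Chat - (μ : ℂ) • (1 : Matrix (Fin P) (Fin P) ℂ)).PosSemidef)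
    (hhigh : ((lam : ℂ) • (1 : Matrix (Fin P) (Fin P) ℂ) - Chat).PosSemidef)
    (hstat : ∀ k, star (v k) ⬝ᵥ ((Chat⁻¹ * (Chat - S) * Chat⁻¹) *ᵥ v k) = 0) :
    frobNorm (Chat - C) ^ 2 ≤ (lam ^ 2 / μ ^ 2) * ε ^ 2 :=
  stmt_1_general P K v a C hCdef hCpd Δ hΔherm ε hΔ S hSdef ahat Chat hChatdef μ lam hμ hμlam hlow
    hhigh hstat
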